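/- arXiv:2012.14376 — 2 statements merged into one kernel-verified Lean document; each statement's English description precedes it below -/
import Mathlib

section
/- Let $G$ be a finite group acting faithfully on a field $K$ by automorphisms, with fixed field $K^G$, and let $L$ be a field extension of $K$ with a faithful $G$-action by automorphisms extending the action on $K$. Then any $K^G$-linear basis $v_1, \ldots, v_{\ell}$ of $K$ over $K^G$ (where $\ell = |G|$) is also an $L^G$-linear basis of $L$ over $L^G$; equivalently, $K$ is linearly disjoint from $L^G$ over $K^G$. -/
/-!
By Artin's lemma, a `K^G`-basis `v` of `K` makes the vectors `(g • vᵢ)_{g ∈ G}` linearly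
independent over `K`, hence, after base change, over `L`. A relation `∑ cᵢ vᵢ = 0` in `L` with
`cᵢ ∈ L^G`, moved by every `g`, is a relation among these vectors, so all `cᵢ` vanish. Since
`[L : L^G] ≤ |G|`, these `|G|` independent vectors already span `L`.
-/

namespace FixedPoints

theorem linearIndependent_toFun {G F ι : Type*} [Group G] [Field F] [MulSemiringAction G F]
    [Finite ι] {v : ι → F} (hv : LinearIndependent (subfield G F) v) :
    LinearIndependent F (MulAction.toFun G F ∘ v) := by
  have hs := hv.linearIndepOn_id
  rw [← (Set.finite_range v).coe_toFinset] at hs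
  have hF := linearIndependent_smul_of_linearIndependent G F hs
  rw [Set.Finite.coe_toFinset] at hF
  exact (linearIndepOn_range_iff hv.injective _).mp hF

theorem linearIndependent_algebraMap_comp {G K L ι : Type*} [Group G] [Finite G] [Field K]
    [Field L] [Algebra K L] [MulSemiringAction G K] [MulSemiringAction G L]
    (hequiv : ∀ (g : G) (a : K), algebraMap K L (g • a) = g • algebraMap K L a)
    [Finite ι] {v : ι → K} (hv : LinearIndependent (subfield G K) v) :
    LinearIndependent (subfield G L) (algebraMap K L ∘ v) := by
  let orbit : L →ₗ[subfield G L] G → L :=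
    LinearMap.pi fun g => (MulSemiringAction.toAlgHom _ L g).toLinearMap
  have horbit :
      orbit ∘ algebraMap K L ∘ v = fun i => algebraMap K L ∘ MulAction.toFun G K (v i) := by
    ext i g
    simp [orbit, hequiv]
  have hL : LinearIndependent L (orbit ∘ algebraMap K L ∘ v) := by
    rw [horbit, linearIndependent_algebraMap_comp_iff]
    exact linearIndependent_toFun hv
  exact (hL.restrict_scalars' (subfield G L)).of_comp

end FixedPoints

theorem basis_of_fixed_field_transfers_general
    (G K L : Type*) [Group G] [Fintype G] [Field K] [Field L]
    [Algebra K L] [MulSemiringAction G K] [MulSemiringAction G L]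
    (hequiv : ∀ (g : G) (a : K), algebraMap K L (g • a) = g • algebraMap K L a)
    {ℓ : ℕ} (hℓ : ℓ = Fintype.card G)
    (v : Module.Basis (Fin ℓ) (FixedPoints.subfield G K) K) :
    LinearIndependent (FixedPoints.subfield G L)
        (fun i : Fin ℓ => algebraMap K L (v i)) ∧
      Submodule.span (FixedPoints.subfield G L)
        (Set.range fun i : Fin ℓ => algebraMap K L (v i)) = ⊤ := by
  have hli := FixedPoints.linearIndependent_algebraMap_comp hequiv v.linearIndependent
  refine ⟨hli, hli.span_eq_top_of_card_eq_finrank' ?_⟩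
  have hle := hli.fintype_card_le_finrank
  have hge := FixedPoints.finrank_le_card G L
  rw [Fintype.card_fin] at hle ⊢
  omega

/-- If `G` acts faithfully (hence strictly) on fields `K ⊆ L` with the
inclusion `G`-equivariant, then any `K^G`-basis of `K` is also an `L^G`-basis of `L`;
i.e. its image in `L` is `L^G`-linearly independent and spans `L` over `L^G`. -/
theorem basis_of_fixed_field_transfers
    (G K L : Type*) [Group G] [Fintype G] [Field K] [Field L] [CharZero K]
    [Algebra K L] [MulSemiringAction G K] [MulSemiringAction G L]
    [FaithfulSMul G K] [FaithfulSMul G L]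
    (hequiv : ∀ (g : G) (a : K), algebraMap K L (g • a) = g • algebraMap K L a)
    {ℓ : ℕ} (hℓ : ℓ = Fintype.card G)
    (v : Module.Basis (Fin ℓ) (FixedPoints.subfield G K) K) :
    LinearIndependent (FixedPoints.subfield G L)
        (fun i : Fin ℓ => algebraMap K L (v i)) ∧
      Submodule.span (FixedPoints.subfield G L)
        (Set.range fun i : Fin ℓ => algebraMap K L (v i)) = ⊤ :=
  basis_of_fixed_field_transfers_general G K L hequiv hℓ v
end

section
/- Let $K \subseteq L$ be fields with $G$ a finite group acting on $L$ by automorphisms preserving $K$, and suppose the action on $K$ is faithful with $[K : K^G] = [L : L^G] = |G|$. Then $L^G \cap K = K^G$ and $L = K \cdot L^G$ (the compositum). -/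
/-!
Faithfulness on `K` passes to `L` along the equivariant embedding, so `G` is the Galois group
of `L / L^G`. An element of `G` fixing the compositum `K · L^G` pointwise fixes `K`, hence is
trivial by faithfulness on `K`; by the Galois correspondence the compositum is then all of `L`.
-/

namespace MulActionHom

variable {G X Y : Type*} [Group G] [MulAction G X] [MulAction G Y]

theorem map_mem_fixedPoints_iff (f : X →[G] Y) (hf : Function.Injective f) (x : X) :
    f x ∈ MulAction.fixedPoints G Y ↔ x ∈ MulAction.fixedPoints G X := by
  simp only [MulAction.mem_fixedPoints, ← map_smul, hf.eq_iff]

theorem fixingSubgroup_range_eq_bot [FaithfulSMul G X] (f : X →[G] Y)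
    (hf : Function.Injective f) : fixingSubgroup G (Set.range f) = ⊥ := by
  refine (Subgroup.eq_bot_iff_forall _).mpr fun g hg ↦ eq_of_smul_eq_smul fun x ↦ hf ?_
  rw [one_smul, map_smul]
  exact hg ⟨f x, x, rfl⟩

end MulActionHom

theorem Subfield.eq_top_of_fixingSubgroup_eq_bot {G L : Type*} [Group G] [Finite G] [Field L]
    [MulSemiringAction G L] [FaithfulSMul G L] {S : Subfield L}
    (hS : FixedPoints.subfield G L ≤ S) (h : fixingSubgroup G (S : Set L) = ⊥) : S = ⊤ := by
  let M : IntermediateField (FixedPoints.subfield G L) L := S.toIntermediateField fun x ↦ hS x.2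
  have hM : M = ⊤ := by
    rw [← IsGaloisGroup.fixedPoints_fixingSubgroup G (FixedPoints.subfield G L) L M]
    exact h ▸ IsGaloisGroup.fixedPoints_bot G _ L
  exact congrArg IntermediateField.toSubfield hM

theorem fixed_field_intersection_and_compositum_general
    (G K L : Type*) [Group G] [Fintype G] [Field K] [Field L]
    [Algebra K L] [MulSemiringAction G K] [MulSemiringAction G L]
    [FaithfulSMul G K]
    (hequiv : ∀ (g : G) (a : K), algebraMap K L (g • a) = g • algebraMap K L a) :
    (∀ a : K, algebraMap K L a ∈ FixedPoints.subfield G L ↔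
        a ∈ FixedPoints.subfield G K) ∧
      (algebraMap K L).fieldRange ⊔ FixedPoints.subfield G L = ⊤ := by
  let f : K →[G] L := ⟨algebraMap K L, hequiv⟩
  have hf : Function.Injective f := (algebraMap K L).injective
  have : FaithfulSMul G L := .of_injective f hf
  refine ⟨f.map_mem_fixedPoints_iff hf,
    Subfield.eq_top_of_fixingSubgroup_eq_bot le_sup_right ?_⟩
  have hrange : Set.range f ⊆ ((algebraMap K L).fieldRange ⊔ FixedPoints.subfield G L :) :=
    fun _ hy ↦ SetLike.le_def.mp le_sup_left hy
  exact le_bot_iff.mp <|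
    (fixingSubgroup_antitone G L hrange).trans (f.fixingSubgroup_range_eq_bot hf).le

/-- If a finite group `G` acts faithfully (equivalently strictly) on fields
`K ⊆ L` with the inclusion `G`-equivariant, then `L^G ∩ K = K^G` and `L = K · L^G`. -/
theorem fixed_field_intersection_and_compositum
    (G K L : Type*) [Group G] [Fintype G] [Field K] [Field L] [CharZero K]
    [Algebra K L] [MulSemiringAction G K] [MulSemiringAction G L]
    [FaithfulSMul G K] [FaithfulSMul G L]
    (hequiv : ∀ (g : G) (a : K), algebraMap K L (g • a) = g • algebraMap K L a) :
    (∀ a : K, algebraMap K L a ∈ FixedPoints.subfield G L ↔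
        a ∈ FixedPoints.subfield G K) ∧
      (algebraMap K L).fieldRange ⊔ FixedPoints.subfield G L = ⊤ :=
  fixed_field_intersection_and_compositum_general G K L hequiv
end
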